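/- Order-uniform integrability implies L¹-uniform integrability: if sup_n F(P_{(|X_n| ≥ λe)}|X_n|) ↓ 0 as λ ↑ ∞ (infimum taken in E), then for every φ ∈ Φ, p_φ(P_{(|X_n| ≥ λe)}|X_n|) → 0 as λ → ∞ uniformly in n. -/
import Mathlib


variable {E : Type*} [AddCommGroup E] [Lattice E]
  [CovariantClass E E (· + ·) (· ≤ ·)] [Module ℝ E]

/-- `E` is Dedekind complete. -/
def DedekindComplete (E : Type*) [AddCommGroup E] [Lattice E] : Prop :=
  ∀ A : Set E, A.Nonempty → BddAbove A → ∃ s, IsLUB A s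

/-- `e` is a weak order unit. -/
def IsWeakUnit (e : E) : Prop :=
  0 < e ∧ ∀ x : E, 0 ≤ x → IsLUB (Set.range fun n : ℕ => x ⊓ n • e) x

/-- A band (order) projection. -/
def IsBandProj (P : E →ₗ[ℝ] E) : Prop :=
  (∀ x, P (P x) = P x) ∧ ∀ x : E, 0 ≤ x → 0 ≤ P x ∧ P x ≤ x

/-- `P` is the band projection onto the band generated by `u ≥ 0`. -/
def IsProjOnBandGen (P : E →ₗ[ℝ] E) (u : E) : Prop :=
  IsBandProj P ∧ ∀ x : E, 0 ≤ x → IsLUB (Set.range fun n : ℕ => x ⊓ n • u) (P x)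

/-- A conditional expectation with respect to the weak order unit `e`. -/
def IsCondExp (e : E) (F : E →ₗ[ℝ] E) : Prop :=
  (∀ x, F (F x) = F x) ∧ (∀ x : E, 0 < x → 0 < F x) ∧ F e = e ∧
  ∀ V : ℕ → E, Antitone V → IsGLB (Set.range V) 0 →
    IsGLB (Set.range fun n => F (V n)) 0

/-- A positive, normalized, (sequentially) order continuous functional. -/
def IsNormedFunctional (e : E) (φ : E →ₗ[ℝ] ℝ) : Prop :=
  (∀ x : E, 0 ≤ x → 0 ≤ φ x) ∧ φ e = 1 ∧
  ∀ V : ℕ → E, Antitone V → IsGLB (Set.range V) 0 →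
    Filter.Tendsto (fun n => φ (V n)) Filter.atTop (nhds 0)

/-- `Φ` is a separating family of normalized positive order continuous functionals. -/
def IsSeparatingFamily (e : E) (Φ : Set (E →ₗ[ℝ] ℝ)) : Prop :=
  (∀ φ ∈ Φ, IsNormedFunctional e φ) ∧ ∀ x : E, (∀ φ ∈ Φ, φ x = 0) → x = 0

/-- The sequence `X` is `L¹`-uniformly integrable with respect to the family of band
projections `P n l` (the projection onto the band generated by `(|X n| - l • e)⁺`). -/
def UnifInt (F : E →ₗ[ℝ] E) (Φ : Set (E →ₗ[ℝ] ℝ)) (X : ℕ → E)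
    (P : ℕ → ℝ → (E →ₗ[ℝ] E)) : Prop :=
  ∀ φ ∈ Φ, ∀ ε : ℝ, 0 < ε → ∃ l₀ : ℝ, ∀ l : ℝ, l₀ ≤ l → ∀ n : ℕ,
    φ (F (P n l |X n|)) < ε

/-- Order-uniform integrability implies `L¹`-uniform integrability: if the suprema
`Z l = sup_n F (P_{(|X n| ≥ l e)} |X n|)` exist in `E` and decrease to `0` as
`l → ∞`, then `(X n)` is `L¹`-uniformly integrable. -/
theorem unifInt_of_order_unifInt
    (hE : DedekindComplete E) (e : E) (he : IsWeakUnit e)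
    (F : E →ₗ[ℝ] E) (hF : IsCondExp e F)
    (Φ : Set (E →ₗ[ℝ] ℝ)) (hΦ : IsSeparatingFamily e Φ)
    (X : ℕ → E) (P : ℕ → ℝ → (E →ₗ[ℝ] E))
    (hP : ∀ n l, IsProjOnBandGen (P n l) ((|X n| - l • e) ⊔ 0))
    (Z : ℝ → E)
    (hZsup : ∀ l : ℝ, IsLUB (Set.range fun n => F (P n l |X n|)) (Z l))
    (hZanti : Antitone Z)
    (hZzero : IsGLB (Set.range Z) 0) :
    UnifInt F Φ X P := by
  intro φ hφ ε hε
  obtain ⟨hpos, hφe, hoc⟩ := hΦ.1 φ hφ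
  have hmono : ∀ a b : E, a ≤ b → φ a ≤ φ b := by
    intro a b hab
    have h := hpos (b - a) (sub_nonneg.mpr hab)
    have : φ b - φ a ≥ 0 := by simpa [map_sub] using h
    linarith
  have hanti : Antitone (fun n : ℕ => Z n) := fun m n hmn => hZanti (by exact_mod_cast hmn)
  have hglb : IsGLB (Set.range fun n : ℕ => Z (n : ℝ)) 0 := by
    constructor
    · rintro _ ⟨n, rfl⟩
      exact hZzero.1 ⟨(n : ℝ), rfl⟩
    · intro b hb
      apply hZzero.2
      rintro _ ⟨l, rfl⟩
      obtain ⟨n, hn⟩ := exists_nat_ge l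
      exact le_trans (hb ⟨n, rfl⟩) (hZanti hn)
  have htend := hoc (fun n : ℕ => Z n) hanti hglb
  obtain ⟨N, hN⟩ := (htend.eventually_lt_const hε).exists
  refine ⟨(N : ℝ), fun l hl n => ?_⟩
  have h1 : F (P n l |X n|) ≤ Z l := (hZsup l).1 ⟨n, rfl⟩
  have h2 : Z l ≤ Z N := hZanti hl
  exact lt_of_le_of_lt (hmono _ _ (le_trans h1 h2)) hN
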